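/- arXiv:1502.00874 — 2 statements merged into one kernel-verified Lean document; each statement's English description precedes it below -/
import Mathlib

section
/- Comparison principle for the ε-mean curvature flow of graphs on the Heisenberg group: let ε ≥ 0, Ω ⊂ ℝ³ bounded open, T > 0, Q = Ω×(0,T). Suppose v, w are bounded, continuous on Q̄, continuously differentiable in t and twice continuously differentiable in x in Q, and satisfy ∂_t v ≤ Σ_{i,j=1}^3 a_{ij}(∇_ε v) X_i^ε X_j^ε v (subsolution) and ∂_t w ≥ Σ_{i,j=1}^3 a_{ij}(∇_ε w) X_i^ε X_j^ε w (supersolution) in Q. If v ≤ w on the parabolic boundary ∂_pQ, then v(x,t) ≤ w(x,t) for all (x,t) ∈ Q. -/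
open Real Set Finset

noncomputable section

/-- Points of the Heisenberg group `ℍ¹ = ℝ³`. -/
abbrev Pt := Fin 3 → ℝ

/-- The Heisenberg group law. -/
def hmul (x y : Pt) : Pt :=
  ![x 0 + y 0, x 1 + y 1, x 2 + y 2 - (x 1 * y 0 - x 0 * y 1)]

/-- Euclidean partial derivative `∂ᵢ`. -/
def pd (i : Fin 3) (f : Pt → ℝ) (x : Pt) : ℝ := fderiv ℝ f x (Pi.single i 1)

/-- The left invariant frame `X₁ = ∂₁ − x₂∂₃`, `X₂ = ∂₂ + x₁∂₃`, `X₃ = 2∂₃`. -/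
def X1 (f : Pt → ℝ) (x : Pt) : ℝ := pd 0 f x - x 1 * pd 2 f x

def X2 (f : Pt → ℝ) (x : Pt) : ℝ := pd 1 f x + x 0 * pd 2 f x

def X3 (f : Pt → ℝ) (x : Pt) : ℝ := 2 * pd 2 f x

/-- The left invariant frame, indexed. -/
def XL (i : Fin 3) : (Pt → ℝ) → Pt → ℝ := ![X1, X2, X3] i

/-- The right invariant frame `X₁^r = ∂₁ + x₂∂₃`, `X₂^r = ∂₂ − x₁∂₃`, `X₃^r = 2∂₃`. -/
def X1r (f : Pt → ℝ) (x : Pt) : ℝ := pd 0 f x + x 1 * pd 2 f x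

def X2r (f : Pt → ℝ) (x : Pt) : ℝ := pd 1 f x - x 0 * pd 2 f x

def X3r (f : Pt → ℝ) (x : Pt) : ℝ := 2 * pd 2 f x

/-- The right invariant frame, indexed. -/
def XR (i : Fin 3) : (Pt → ℝ) → Pt → ℝ := ![X1r, X2r, X3r] i

/-- The ε-frame `X₁^ε = X₁`, `X₂^ε = X₂`, `X₃^ε = εX₃`. -/
def Xe (ε : ℝ) (i : Fin 3) : (Pt → ℝ) → Pt → ℝ :=
  ![X1, X2, fun f x => ε * X3 f x] i

/-- The ε-gradient `∇_εf = (X₁^εf, X₂^εf, X₃^εf)`. -/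
def gradE (ε : ℝ) (f : Pt → ℝ) (x : Pt) : Pt := fun i => Xe ε i f x

/-- `a_{ij}(ξ) = δ_{ij} − ξ_iξ_j/(1+|ξ|²)`. -/
def aCoef (ξ : Pt) (i j : Fin 3) : ℝ :=
  (if i = j then 1 else 0) - ξ i * ξ j / (1 + ∑ k, ξ k ^ 2)

/-!
Penalize the difference: for `σ > 0` let `φ = v - w - σ t`. By compactness `φ` attains its
maximum over `closure Ω × [0, t]`; if the maximum were positive, the boundary data force it into
the parabolic interior. There `∂ₜ(v - w) ≥ σ > 0`, while `∇v = ∇w` and `D²(v - w) ≤ 0`. Writing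
`X^ε_i f = Df(F_i)` for the coefficient fields `F_i`, the first-order terms of `X^ε_i X^ε_j v` and
`X^ε_i X^ε_j w` then agree, so the difference of the two operators is
`∑ a_{ij}(∇_ε v) D²(v - w)(F_i, F_j)`. This is `≤ 0` because `(1 + |ξ|²) a(ξ)` is
`I + ∑_{k<l} (ξ_k e_l - ξ_l e_k)⊗(ξ_k e_l - ξ_l e_k)`, a sum of squares. This contradicts the
sub- and supersolution inequalities, and letting `σ → 0` gives `v ≤ w`.
-/

open Filter Topology

section Calculus

variable {𝕜 E F : Type*} [NontriviallyNormedField 𝕜] [NormedAddCommGroup E] [NormedSpace 𝕜 E]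
  [NormedAddCommGroup F] [NormedSpace 𝕜 F]

theorem ContDiffAt.differentiableAt_fderiv {f : E → F} {x : E} (hf : ContDiffAt 𝕜 2 f x) :
    DifferentiableAt 𝕜 (fderiv 𝕜 f) x :=
  (hf.fderiv_right (m := 1) one_add_one_eq_two.le).differentiableAt one_ne_zero

theorem fderiv_apply_field_apply {f : E → F} {V : E → E} {x : E}
    (hf : DifferentiableAt 𝕜 (fderiv 𝕜 f) x) (hV : DifferentiableAt 𝕜 V x) (h : E) :
    fderiv 𝕜 (fun y => fderiv 𝕜 f y (V y)) x h =
      fderiv 𝕜 (fderiv 𝕜 f) x h (V x) + fderiv 𝕜 f x (fderiv 𝕜 V x h) := by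
  rw [fderiv_clm_apply hf hV]
  simp [add_comm]

theorem fderiv_fderiv_sub {v w : E → F} {x : E} (hv : ContDiffAt 𝕜 2 v x)
    (hw : ContDiffAt 𝕜 2 w x) :
    fderiv 𝕜 (fderiv 𝕜 fun y => v y - w y) x =
      fderiv 𝕜 (fderiv 𝕜 v) x - fderiv 𝕜 (fderiv 𝕜 w) x := by
  have hfd : fderiv 𝕜 (fun y => v y - w y) =ᶠ[𝓝 x] fun y => fderiv 𝕜 v y - fderiv 𝕜 w y :=
    ((hv.eventually (by simp)).and (hw.eventually (by simp))).mono fun y hy =>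
      fderiv_sub (hy.1.differentiableAt (by simp)) (hy.2.differentiableAt (by simp))
  rw [hfd.fderiv_eq, fderiv_fun_sub hv.differentiableAt_fderiv hw.differentiableAt_fderiv]

end Calculus

-- A local maximum that the second derivative test would make a local minimum is locally constant.
theorem IsLocalMax.deriv_deriv_nonpos {h : ℝ → ℝ} {a : ℝ} (hmax : IsLocalMax h a)
    (hc : ContinuousAt h a) : deriv (deriv h) a ≤ 0 := by
  by_contra! hpos
  have hmin := isLocalMin_of_deriv_deriv_pos hpos hmax.deriv_eq_zero hc
  have hconst : h =ᶠ[𝓝 a] fun _ => h a :=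
    (hmin.and hmax).mono fun _ hx => le_antisymm hx.2 hx.1
  have hzero : deriv (deriv h) a = 0 := by
    rw [hconst.deriv.deriv_eq]
    simp
  exact hpos.ne' hzero

theorem IsLocalMaxOn.hasDerivAt_nonneg_of_Iic {ψ : ℝ → ℝ} {b d : ℝ}
    (hmax : IsLocalMaxOn ψ (Iic b) b) (hψ : HasDerivAt ψ d b) : 0 ≤ d := by
  have hcone : (-1 : ℝ) ∈ posTangentConeAt (Iic b) b :=
    mem_posTangentConeAt_of_segment_subset (by
      rw [segment_symm, segment_eq_Icc (by linarith)]
      exact Icc_subset_Iic_self)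
  simpa using hmax.hasFDerivWithinAt_nonpos hψ.hasFDerivAt.hasFDerivWithinAt hcone

section SecondDerivativeTest

variable {E : Type*} [NormedAddCommGroup E] [NormedSpace ℝ E]

theorem deriv_deriv_comp_line {f : E → ℝ} {x y : E} (hf : ContDiffAt ℝ 2 f x) :
    deriv (deriv fun s : ℝ => f (x + s • y)) 0 = fderiv ℝ (fderiv ℝ f) x y y := by
  have hline : ∀ s : ℝ, HasDerivAt (fun s : ℝ => x + s • y) y s := fun s => by
    simpa using ((hasDerivAt_id s).smul_const y).const_add x
  have hdiff : ∀ᶠ z in 𝓝 x, DifferentiableAt ℝ f z :=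
    (hf.eventually (by simp)).mono fun z hz => hz.differentiableAt (by simp)
  have htend : Tendsto (fun s : ℝ => x + s • y) (𝓝 0) (𝓝 x) := by
    simpa using (hline 0).continuousAt.tendsto
  have hderiv : deriv (fun s : ℝ => f (x + s • y)) =ᶠ[𝓝 0]
      fun s => fderiv ℝ f (x + s • y) y :=
    (htend.eventually hdiff).mono fun s hs => (hs.hasFDerivAt.comp_hasDerivAt s (hline s)).deriv
  have hf' : HasFDerivAt (fderiv ℝ f) (fderiv ℝ (fderiv ℝ f) x) (x + (0 : ℝ) • y) := by
    rw [zero_smul, add_zero]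
    exact hf.differentiableAt_fderiv.hasFDerivAt
  have hDf : HasDerivAt (fun s : ℝ => fderiv ℝ f (x + s • y)) (fderiv ℝ (fderiv ℝ f) x y) 0 :=
    hf'.comp_hasDerivAt (x := (0 : ℝ)) (hline 0)
  rw [hderiv.deriv_eq]
  simpa using (hDf.clm_apply (hasDerivAt_const (0 : ℝ) y)).deriv

theorem IsLocalMax.fderiv_fderiv_apply_self_nonpos {f : E → ℝ} {x : E} (hmax : IsLocalMax f x)
    (hf : ContDiffAt ℝ 2 f x) (y : E) : fderiv ℝ (fderiv ℝ f) x y y ≤ 0 := by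
  have hline : ContinuousAt (fun s : ℝ => x + s • y) 0 := by fun_prop
  have hmax' : IsLocalMax f (x + (0 : ℝ) • y) := by simpa using hmax
  rw [← deriv_deriv_comp_line hf]
  exact (hmax'.comp_continuous (g := fun s : ℝ => x + s • y) hline).deriv_deriv_nonpos
    (hf.continuousAt.comp_of_eq hline (by simp))

end SecondDerivativeTest

theorem fderiv_apply_eq_sum_pd (f : Pt → ℝ) (x u : Pt) :
    fderiv ℝ f x u = ∑ k, u k * pd k f x := by
  conv_lhs => rw [← Finset.univ_sum_single u]
  simp only [map_sum, pd]
  refine Finset.sum_congr rfl fun k _ => ?_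
  rw [← smul_eq_mul, ← map_smul, ← Pi.single_smul', smul_eq_mul, mul_one]

def frameField (ε : ℝ) (i : Fin 3) (x : Pt) : Pt :=
  ![![1, 0, -x 1], ![0, 1, x 0], ![0, 0, 2 * ε]] i

theorem Xe_eq_fderiv_apply (ε : ℝ) (i : Fin 3) (f : Pt → ℝ) (x : Pt) :
    Xe ε i f x = fderiv ℝ f x (frameField ε i x) := by
  rw [fderiv_apply_eq_sum_pd]
  fin_cases i <;> simp [Xe, X1, X2, X3, frameField, Fin.sum_univ_three] <;> ring

theorem differentiable_frameField (ε : ℝ) (i : Fin 3) : Differentiable ℝ (frameField ε i) := by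
  refine differentiable_pi.2 fun j => ?_
  fin_cases i <;> fin_cases j <;> simp [frameField] <;> fun_prop

theorem Xe_Xe_eq {f : Pt → ℝ} {x : Pt} (hf : DifferentiableAt ℝ (fderiv ℝ f) x) (ε : ℝ)
    (i j : Fin 3) :
    Xe ε i (Xe ε j f) x = fderiv ℝ (fderiv ℝ f) x (frameField ε i x) (frameField ε j x) +
      fderiv ℝ f x (fderiv ℝ (frameField ε j) x (frameField ε i x)) := by
  have hXj : Xe ε j f = fun y => fderiv ℝ f y (frameField ε j y) :=
    funext (Xe_eq_fderiv_apply ε j f)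
  rw [Xe_eq_fderiv_apply, hXj, fderiv_apply_field_apply hf (differentiable_frameField ε j x)]

section Coefficients

variable {E : Type*} [NormedAddCommGroup E] [NormedSpace ℝ E]

theorem one_add_sum_sq_mul_sum_aCoef (ξ : Pt) (B : E →L[ℝ] E →L[ℝ] ℝ) (s : Fin 3 → E) :
    (1 + ∑ k, ξ k ^ 2) * ∑ i, ∑ j, aCoef ξ i j * B (s i) (s j) =
      ∑ i, B (s i) (s i) + B (ξ 0 • s 1 - ξ 1 • s 0) (ξ 0 • s 1 - ξ 1 • s 0) +
        B (ξ 0 • s 2 - ξ 2 • s 0) (ξ 0 • s 2 - ξ 2 • s 0) +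
        B (ξ 1 • s 2 - ξ 2 • s 1) (ξ 1 • s 2 - ξ 2 • s 1) := by
  have hc : 1 + ∑ k, ξ k ^ 2 ≠ 0 := by positivity
  simp only [aCoef, Fin.sum_univ_three, Fin.reduceEq, ↓reduceIte, map_sub, map_smul, sub_apply,
    smul_apply, smul_eq_mul] at hc ⊢
  field_simp
  ring

theorem sum_aCoef_mul_nonpos (ξ : Pt) {B : E →L[ℝ] E →L[ℝ] ℝ} (hB : ∀ y, B y y ≤ 0)
    (s : Fin 3 → E) : ∑ i, ∑ j, aCoef ξ i j * B (s i) (s j) ≤ 0 := by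
  have hc : 0 < 1 + ∑ k, ξ k ^ 2 := by positivity
  refine nonpos_of_mul_nonpos_right ?_ hc
  rw [one_add_sum_sq_mul_sum_aCoef]
  have hdiag := Finset.sum_nonpos fun i (_ : i ∈ Finset.univ) => hB (s i)
  linarith [hB (ξ 0 • s 1 - ξ 1 • s 0), hB (ξ 0 • s 2 - ξ 2 • s 0), hB (ξ 1 • s 2 - ξ 2 • s 1)]

end Coefficients

def mcfOp (ε : ℝ) (f : Pt → ℝ) (x : Pt) : ℝ :=
  ∑ i, ∑ j, aCoef (gradE ε f x) i j * Xe ε i (Xe ε j f) x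

theorem mcfOp_sub_mcfOp_of_fderiv_eq {v w : Pt → ℝ} {x : Pt}
    (hv : DifferentiableAt ℝ (fderiv ℝ v) x) (hw : DifferentiableAt ℝ (fderiv ℝ w) x)
    (hD : fderiv ℝ v x = fderiv ℝ w x) (ε : ℝ) :
    mcfOp ε v x - mcfOp ε w x = ∑ i, ∑ j, aCoef (gradE ε v x) i j *
      (fderiv ℝ (fderiv ℝ v) x - fderiv ℝ (fderiv ℝ w) x) (frameField ε i x)
        (frameField ε j x) := by
  have hgrad : gradE ε v x = gradE ε w x := by
    funext i
    simp only [gradE, Xe_eq_fderiv_apply, hD]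
  simp only [mcfOp, hgrad, Xe_Xe_eq hv, Xe_Xe_eq hw, hD, ← Finset.sum_sub_distrib, ← mul_sub,
    sub_apply, add_sub_add_right_eq_sub]

theorem mcfOp_le_of_isLocalMax_sub {v w : Pt → ℝ} {x : Pt} (hv : ContDiffAt ℝ 2 v x)
    (hw : ContDiffAt ℝ 2 w x) (hmax : IsLocalMax (fun y => v y - w y) x) (ε : ℝ) :
    mcfOp ε v x ≤ mcfOp ε w x := by
  have hD : fderiv ℝ v x = fderiv ℝ w x := by
    have h := hmax.fderiv_eq_zero
    rwa [fderiv_fun_sub (hv.differentiableAt (by simp)) (hw.differentiableAt (by simp)),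
      sub_eq_zero] at h
  have hB : ∀ y, (fderiv ℝ (fderiv ℝ v) x - fderiv ℝ (fderiv ℝ w) x) y y ≤ 0 := by
    rw [← fderiv_fderiv_sub hv hw]
    exact hmax.fderiv_fderiv_apply_self_nonpos (hv.sub hw)
  rw [← sub_nonpos, mcfOp_sub_mcfOp_of_fderiv_eq hv.differentiableAt_fderiv
    hw.differentiableAt_fderiv hD]
  exact sum_aCoef_mul_nonpos _ hB _

theorem penalty_nonpos_of_isLocalMax {ε σ : ℝ} {v w : Pt → ℝ → ℝ} {x₀ : Pt} {t₀ : ℝ}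
    (hvx : ContDiffAt ℝ 2 (fun y => v y t₀) x₀) (hwx : ContDiffAt ℝ 2 (fun y => w y t₀) x₀)
    (hvt : DifferentiableAt ℝ (v x₀) t₀) (hwt : DifferentiableAt ℝ (w x₀) t₀)
    (hsub : deriv (v x₀) t₀ ≤ mcfOp ε (fun y => v y t₀) x₀)
    (hsup : mcfOp ε (fun y => w y t₀) x₀ ≤ deriv (w x₀) t₀)
    (hmaxx : IsLocalMax (fun y => v y t₀ - w y t₀ - σ * t₀) x₀)
    (hmaxt : IsLocalMaxOn (fun s => v x₀ s - w x₀ s - σ * s) (Iic t₀) t₀) : σ ≤ 0 := by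
  have htime : 0 ≤ deriv (v x₀) t₀ - deriv (w x₀) t₀ - σ :=
    hmaxt.hasDerivAt_nonneg_of_Iic
      ((hvt.hasDerivAt.sub hwt.hasDerivAt).sub (by simpa using (hasDerivAt_id t₀).const_mul σ))
  have hspace : mcfOp ε (fun y => v y t₀) x₀ ≤ mcfOp ε (fun y => w y t₀) x₀ :=
    mcfOp_le_of_isLocalMax_sub hvx hwx
      (by simpa using hmaxx.add (isLocalMax_const (b := σ * t₀))) ε
  linarith

theorem nonpos_of_parabolic_boundary_nonpos {Ω : Set Pt} (hΩo : IsOpen Ω)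
    (hΩb : Bornology.IsBounded Ω) {t₁ : ℝ} {φ : Pt → ℝ → ℝ}
    (hφc : ContinuousOn (fun q : Pt × ℝ => φ q.1 q.2) (closure Ω ×ˢ Icc 0 t₁))
    (hinit : ∀ x ∈ closure Ω, φ x 0 ≤ 0)
    (hlat : ∀ x ∈ frontier Ω, ∀ t ∈ Ioc 0 t₁, φ x t ≤ 0)
    (hint : ∀ x ∈ Ω, ∀ t ∈ Ioc 0 t₁, IsLocalMax (fun y => φ y t) x →
      IsLocalMaxOn (φ x) (Iic t) t → φ x t ≤ 0) :
    ∀ x ∈ closure Ω, ∀ t ∈ Icc 0 t₁, φ x t ≤ 0 := by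
  intro x hx t ht
  obtain ⟨⟨x₀, t₀⟩, ⟨hx₀, ht₀⟩, hmax⟩ :=
    (hΩb.isCompact_closure.prod isCompact_Icc).exists_isMaxOn ⟨(x, t), hx, ht⟩ hφc
  refine (hmax (show (x, t) ∈ closure Ω ×ˢ Icc 0 t₁ from ⟨hx, ht⟩)).trans ?_
  rcases ht₀.1.eq_or_lt with rfl | ht₀pos
  · exact hinit x₀ hx₀
  by_cases hx₀Ω : x₀ ∈ Ω
  · refine hint x₀ hx₀Ω t₀ ⟨ht₀pos, ht₀.2⟩ ?_ ?_
    · filter_upwards [hΩo.mem_nhds hx₀Ω] with y hy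
      exact hmax (show (y, t₀) ∈ closure Ω ×ˢ Icc 0 t₁ from ⟨subset_closure hy, ht₀⟩)
    · filter_upwards [Ioc_mem_nhdsLE ht₀pos] with s hs
      exact hmax (show (x₀, s) ∈ closure Ω ×ˢ Icc 0 t₁ from ⟨hx₀, hs.1.le, hs.2.trans ht₀.2⟩)
  · exact hlat x₀ ⟨hx₀, by rwa [hΩo.interior_eq]⟩ t₀ ⟨ht₀pos, ht₀.2⟩

theorem statement_8_general (ε : ℝ) (Ω : Set Pt) (hΩo : IsOpen Ω)
    (hΩb : Bornology.IsBounded Ω) (T : ℝ) (hT : 0 < T) (v w : Pt → ℝ → ℝ)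
    -- continuity on the closure of `Q = Ω × (0,T)`
    (hvc : ContinuousOn (fun q : Pt × ℝ => v q.1 q.2) (closure (Ω ×ˢ Ioo 0 T)))
    (hwc : ContinuousOn (fun q : Pt × ℝ => w q.1 q.2) (closure (Ω ×ˢ Ioo 0 T)))
    -- `C¹` in time and `C²` in space inside `Q`
    (hvx : ∀ t ∈ Ioo (0 : ℝ) T, ContDiffOn ℝ 2 (fun x => v x t) Ω)
    (hvt : ∀ x ∈ Ω, ContDiffOn ℝ 1 (v x) (Ioo 0 T))
    (hwx : ∀ t ∈ Ioo (0 : ℝ) T, ContDiffOn ℝ 2 (fun x => w x t) Ω)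
    (hwt : ∀ x ∈ Ω, ContDiffOn ℝ 1 (w x) (Ioo 0 T))
    -- `v` is a subsolution and `w` a supersolution
    (hsub : ∀ x ∈ Ω, ∀ t ∈ Ioo (0 : ℝ) T,
      deriv (v x) t ≤ ∑ i, ∑ j, aCoef (gradE ε (fun y => v y t) x) i j *
        Xe ε i (Xe ε j (fun y => v y t)) x)
    (hsup : ∀ x ∈ Ω, ∀ t ∈ Ioo (0 : ℝ) T,
      ∑ i, ∑ j, aCoef (gradE ε (fun y => w y t) x) i j *
        Xe ε i (Xe ε j (fun y => w y t)) x ≤ deriv (w x) t)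
    -- `v ≤ w` on the parabolic boundary
    (hbd0 : ∀ x ∈ closure Ω, v x 0 ≤ w x 0)
    (hbd1 : ∀ x ∈ frontier Ω, ∀ t ∈ Ioo (0 : ℝ) T, v x t ≤ w x t) :
    ∀ x ∈ Ω, ∀ t ∈ Ioo (0 : ℝ) T, v x t ≤ w x t := by
  intro x hx t ht
  refine le_of_forall_pos_le_add fun δ hδ => ?_
  have hσ : 0 < δ / t := div_pos hδ ht.1
  have hKQ : closure Ω ×ˢ Icc 0 t ⊆ closure (Ω ×ˢ Ioo 0 T) := by
    rw [closure_prod_eq, closure_Ioo hT.ne]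
    exact prod_mono_right (Icc_subset_Icc_right ht.2.le)
  have hpen := nonpos_of_parabolic_boundary_nonpos (φ := fun y s => v y s - w y s - δ / t * s)
    hΩo hΩb (((hvc.mono hKQ).sub (hwc.mono hKQ)).sub (by fun_prop))
    (fun y hy => by simpa using hbd0 y hy)
    (fun y hy s hs => by
      nlinarith [hbd1 y hy s ⟨hs.1, hs.2.trans_lt ht.2⟩, mul_pos hσ hs.1])
    (fun y hy s hs hmx hmt => by
      have hsT : s ∈ Ioo 0 T := ⟨hs.1, hs.2.trans_lt ht.2⟩
      refine absurd (penalty_nonpos_of_isLocalMax ?_ ?_ ?_ ?_ (hsub y hy s hsT)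
        (hsup y hy s hsT) hmx hmt) hσ.not_ge
      · exact (hvx s hsT).contDiffAt (hΩo.mem_nhds hy)
      · exact (hwx s hsT).contDiffAt (hΩo.mem_nhds hy)
      · exact ((hvt y hy).contDiffAt (isOpen_Ioo.mem_nhds hsT)).differentiableAt one_ne_zero
      · exact ((hwt y hy).contDiffAt (isOpen_Ioo.mem_nhds hsT)).differentiableAt one_ne_zero)
    x (subset_closure hx) t ⟨ht.1.le, le_rfl⟩
  rw [div_mul_cancel₀ δ ht.1.ne'] at hpen
  linarith

/-- Comparison principle for the ε-mean curvature flow of graphs on the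
Heisenberg group: a bounded subsolution lies below a bounded supersolution
provided this holds on the parabolic boundary. -/
theorem statement_8 (ε : ℝ) (hε : 0 ≤ ε) (Ω : Set Pt) (hΩo : IsOpen Ω)
    (hΩb : Bornology.IsBounded Ω) (T : ℝ) (hT : 0 < T) (v w : Pt → ℝ → ℝ)
    -- continuity on the closure of `Q = Ω × (0,T)`
    (hvc : ContinuousOn (fun q : Pt × ℝ => v q.1 q.2) (closure (Ω ×ˢ Ioo 0 T)))
    (hwc : ContinuousOn (fun q : Pt × ℝ => w q.1 q.2) (closure (Ω ×ˢ Ioo 0 T)))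
    -- boundedness
    (hvb : ∃ M, ∀ q ∈ closure (Ω ×ˢ Ioo 0 T), |v q.1 q.2| ≤ M)
    (hwb : ∃ M, ∀ q ∈ closure (Ω ×ˢ Ioo 0 T), |w q.1 q.2| ≤ M)
    -- `C¹` in time and `C²` in space inside `Q`
    (hvx : ∀ t ∈ Ioo (0 : ℝ) T, ContDiffOn ℝ 2 (fun x => v x t) Ω)
    (hvt : ∀ x ∈ Ω, ContDiffOn ℝ 1 (v x) (Ioo 0 T))
    (hwx : ∀ t ∈ Ioo (0 : ℝ) T, ContDiffOn ℝ 2 (fun x => w x t) Ω)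
    (hwt : ∀ x ∈ Ω, ContDiffOn ℝ 1 (w x) (Ioo 0 T))
    -- `v` is a subsolution and `w` a supersolution
    (hsub : ∀ x ∈ Ω, ∀ t ∈ Ioo (0 : ℝ) T,
      deriv (v x) t ≤ ∑ i, ∑ j, aCoef (gradE ε (fun y => v y t) x) i j *
        Xe ε i (Xe ε j (fun y => v y t)) x)
    (hsup : ∀ x ∈ Ω, ∀ t ∈ Ioo (0 : ℝ) T,
      ∑ i, ∑ j, aCoef (gradE ε (fun y => w y t) x) i j *
        Xe ε i (Xe ε j (fun y => w y t)) x ≤ deriv (w x) t)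
    -- `v ≤ w` on the parabolic boundary
    (hbd0 : ∀ x ∈ closure Ω, v x 0 ≤ w x 0)
    (hbd1 : ∀ x ∈ frontier Ω, ∀ t ∈ Ioo (0 : ℝ) T, v x t ≤ w x t) :
    ∀ x ∈ Ω, ∀ t ∈ Ioo (0 : ℝ) T, v x t ≤ w x t :=
  statement_8_general ε Ω hΩo hΩb T hT v w hvc hwc hvx hvt hwx hwt hsub hsup hbd0 hbd1

end
end

section
/- Let ε ∈ (0,1], Ω ⊂ ℝ³ open, T > 0, and let u ∈ C³(Ω×(0,T)) solve the mean curvature flow equation ∂_t u = Σ_{i,j=1}^3 a_{ij}(∇_ε u) X_i^ε X_j^ε u on the Heisenberg group. Then the functions v₀ = ∂_t u and v_h = X_h^r u (h = 1,2,3) each solve the linearized equation ∂_t v = Σ_{i,j=1}^3 a_{ij}(∇_ε u) X_i^ε X_j^ε v + Σ_{i,j,k=1}^3 (∂_{ξ_k} a_{ij})(∇_ε u) · (X_i^ε X_j^ε u) · X_k^ε v on Ω×(0,T). -/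
open Real Set Finset

noncomputable section

/-- `∂_{ξ_h} a_{ij}(ξ)`, the partial derivative of the coefficient matrix. -/
def aCoefD (h : Fin 3) (ξ : Pt) (i j : Fin 3) : ℝ :=
  fderiv ℝ (fun η => aCoef η i j) ξ (Pi.single h 1)

/-! Pass to spacetime `ℝ³ × ℝ`, where `X_i^ε`, `X_h^r` and `∂_t` become affine vector fields
`q ↦ c + φ(q) e` along the central direction `e = ∂₃`. Left- and right-invariant fields commute
and both commute with `∂_t`, so for `W ∈ {∂_t, X_h^r}` the brackets `[X_i^ε, W]` and `[∂_t, W]`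
vanish. Applying `W` to the equation and moving it past `∂_t` and `X_i^ε X_j^ε` (symmetry of
second derivatives, `u ∈ C³`) gives the linearized equation for `v = W u`; the chain rule
applied to `a_{ij}(∇_ε u)` produces the `∂_{ξ_k} a_{ij}` terms. -/

open Filter Topology VectorField

section VectorFieldCalculus

variable {E : Type*} [NormedAddCommGroup E] [NormedSpace ℝ E]

def dirDeriv (V : E → E) (f : E → ℝ) (q : E) : ℝ := fderiv ℝ f q (V q)

lemma dirDeriv_congr (V : E → E) {f g : E → ℝ} {q : E} (h : f =ᶠ[𝓝 q] g) :
    dirDeriv V f q = dirDeriv V g q := by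
  rw [dirDeriv, dirDeriv, h.fderiv_eq]

lemma ContDiffOn.dirDeriv {V : E → E} {f : E → ℝ} {U : Set E} {n : ℕ} (hU : IsOpen U)
    (hf : ContDiffOn ℝ (n + 1) f U) (hV : ContDiff ℝ n V) :
    ContDiffOn ℝ n (dirDeriv V f) U :=
  (hf.fderiv_of_isOpen hU le_rfl).clm_apply hV.contDiffOn

lemma dirDeriv_comm {V W : E → E} {f : E → ℝ} {q : E} (hf : ContDiffAt ℝ 2 f q)
    (hV : DifferentiableAt ℝ V q) (hW : DifferentiableAt ℝ W q)
    (hVW : lieBracket ℝ V W q = 0) :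
    dirDeriv V (dirDeriv W f) q = dirDeriv W (dirDeriv V f) q := by
  have h := fderiv_apply_lieBracket hf (by simp) hW hV
  rw [hVW, map_zero, eq_comm, sub_eq_zero] at h
  exact h

lemma dirDeriv_mul {V : E → E} {f g : E → ℝ} {q : E} (hf : DifferentiableAt ℝ f q)
    (hg : DifferentiableAt ℝ g q) :
    dirDeriv V (fun p => f p * g p) q = dirDeriv V f q * g q + f q * dirDeriv V g q := by
  simp only [dirDeriv, fderiv_fun_mul hf hg, add_apply, smul_apply, smul_eq_mul]
  ring

lemma dirDeriv_sum {ι : Type*} (s : Finset ι) {V : E → E} {f : ι → E → ℝ} {q : E}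
    (hf : ∀ i ∈ s, DifferentiableAt ℝ (f i) q) :
    dirDeriv V (fun p => ∑ i ∈ s, f i p) q = ∑ i ∈ s, dirDeriv V (f i) q := by
  simp only [dirDeriv, fderiv_fun_sum hf, _root_.sum_apply]

lemma apply_eq_sum_mul_apply_single (A : (Fin n → ℝ) →L[ℝ] ℝ) (w : Fin n → ℝ) :
    A w = ∑ k, w k * A (Pi.single k 1) := by
  conv_lhs => rw [pi_eq_sum_univ' w]
  simp [map_sum, map_smul]

lemma dirDeriv_comp {V : E → E} {φ : (Fin n → ℝ) → ℝ} {g : Fin n → E → ℝ} {q : E}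
    (hφ : DifferentiableAt ℝ φ (fun k => g k q)) (hg : ∀ k, DifferentiableAt ℝ (g k) q) :
    dirDeriv V (fun p => φ (fun k => g k p)) q
      = ∑ k, dirDeriv V (g k) q * fderiv ℝ φ (fun k => g k q) (Pi.single k 1) := by
  have hG : HasFDerivAt (fun p k => g k p)
      (ContinuousLinearMap.pi fun k => fderiv ℝ (g k) q) q :=
    hasFDerivAt_pi.2 fun k => (hg k).hasFDerivAt
  have hc : HasFDerivAt (fun p => φ fun k => g k p) _ q := hφ.hasFDerivAt.comp q hG
  rw [dirDeriv, hc.fderiv, ContinuousLinearMap.comp_apply,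
    apply_eq_sum_mul_apply_single]
  rfl

variable {n : ℕ}

def fieldGrad (X : Fin n → E → E) (f : E → ℝ) (q : E) : Fin n → ℝ :=
  fun k => dirDeriv (X k) f q

def quasilinearOp (a : (Fin n → ℝ) → Fin n → Fin n → ℝ) (X : Fin n → E → E) (f : E → ℝ)
    (q : E) : ℝ :=
  ∑ i, ∑ j, a (fieldGrad X f q) i j * dirDeriv (X i) (dirDeriv (X j) f) q

def linearizedOp (a : (Fin n → ℝ) → Fin n → Fin n → ℝ) (X : Fin n → E → E) (f v : E → ℝ)
    (q : E) : ℝ :=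
  (∑ i, ∑ j, a (fieldGrad X f q) i j * dirDeriv (X i) (dirDeriv (X j) v) q) +
    ∑ i, ∑ j, ∑ k, fderiv ℝ (fun η => a η i j) (fieldGrad X f q) (Pi.single k 1) *
      dirDeriv (X i) (dirDeriv (X j) f) q * dirDeriv (X k) v q

lemma dirDeriv_quasilinearOp {a : (Fin n → ℝ) → Fin n → Fin n → ℝ} {X : Fin n → E → E}
    {W : E → E} {F : E → ℝ} {q : E}
    (ha : ∀ i j, DifferentiableAt ℝ (fun η => a η i j) (fieldGrad X F q))
    (hXF : ∀ k, DifferentiableAt ℝ (dirDeriv (X k) F) q)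
    (hXXF : ∀ i j, DifferentiableAt ℝ (dirDeriv (X i) (dirDeriv (X j) F)) q) :
    dirDeriv W (quasilinearOp a X F) q =
      ∑ i, ∑ j, ((∑ k, dirDeriv W (dirDeriv (X k) F) q *
            fderiv ℝ (fun η => a η i j) (fieldGrad X F q) (Pi.single k 1)) *
              dirDeriv (X i) (dirDeriv (X j) F) q +
          a (fieldGrad X F q) i j * dirDeriv W (dirDeriv (X i) (dirDeriv (X j) F)) q) := by
  have ha_comp : ∀ i j, DifferentiableAt ℝ (fun p => a (fieldGrad X F p) i j) q :=
    fun i j => (ha i j).comp q (differentiableAt_pi.2 hXF)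
  unfold quasilinearOp
  rw [dirDeriv_sum _ fun i _ =>
    DifferentiableAt.fun_sum fun j _ => (ha_comp i j).fun_mul (hXXF i j)]
  refine Finset.sum_congr rfl fun i _ => ?_
  rw [dirDeriv_sum _ fun j _ => (ha_comp i j).fun_mul (hXXF i j)]
  refine Finset.sum_congr rfl fun j _ => ?_
  rw [dirDeriv_mul (ha_comp i j) (hXXF i j)]
  congr 2
  exact dirDeriv_comp (ha i j) hXF

theorem dirDeriv_solves_linearizedOp {a : (Fin n → ℝ) → Fin n → Fin n → ℝ}
    {X : Fin n → E → E} {T W : E → E} {F : E → ℝ} {U : Set E} (hU : IsOpen U)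
    (ha : ∀ i j, Differentiable ℝ fun η => a η i j) (hX : ∀ i, ContDiff ℝ 2 (X i))
    (hT : Differentiable ℝ T) (hW : Differentiable ℝ W) (hF : ContDiffOn ℝ 3 F U)
    (hXW : ∀ i, lieBracket ℝ (X i) W = 0) (hTW : lieBracket ℝ T W = 0)
    (hpde : ∀ p ∈ U, dirDeriv T F p = quasilinearOp a X F p) {q : E} (hq : q ∈ U) :
    dirDeriv T (dirDeriv W F) q = linearizedOp a X F (dirDeriv W F) q := by
  have hF2 : ∀ p ∈ U, ContDiffAt ℝ 2 F p := fun p hp =>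
    (hF.contDiffAt (hU.mem_nhds hp)).of_le (by norm_num)
  have hXF : ∀ j, ContDiffOn ℝ 2 (dirDeriv (X j) F) U := fun j => hF.dirDeriv hU (hX j)
  have hXF_diff : ∀ j, DifferentiableAt ℝ (dirDeriv (X j) F) q := fun j =>
    ((hXF j).contDiffAt (hU.mem_nhds hq)).differentiableAt (by norm_num)
  have hXXF_diff : ∀ i j, DifferentiableAt ℝ (dirDeriv (X i) (dirDeriv (X j) F)) q :=
    fun i j => (((hXF j).dirDeriv (n := 1) hU ((hX i).of_le one_le_two)).contDiffAt
      (hU.mem_nhds hq)).differentiableAt one_ne_zero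
  have hXv : ∀ j, ∀ p ∈ U, dirDeriv (X j) (dirDeriv W F) p = dirDeriv W (dirDeriv (X j) F) p :=
    fun j p hp => dirDeriv_comm (hF2 p hp) ((hX j).differentiable (by norm_num) p) (hW p)
      (congrFun (hXW j) p)
  have hXXv : ∀ i j, dirDeriv (X i) (dirDeriv (X j) (dirDeriv W F)) q
      = dirDeriv W (dirDeriv (X i) (dirDeriv (X j) F)) q := fun i j =>
    (dirDeriv_congr _ (eventually_of_mem (hU.mem_nhds hq) (hXv j))).trans
      (dirDeriv_comm ((hXF j).contDiffAt (hU.mem_nhds hq))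
        ((hX i).differentiable (by norm_num) q) (hW q) (congrFun (hXW i) q))
  calc dirDeriv T (dirDeriv W F) q
      = dirDeriv W (dirDeriv T F) q :=
        dirDeriv_comm (hF2 q hq) (hT q) (hW q) (congrFun hTW q)
    _ = dirDeriv W (quasilinearOp a X F) q :=
        dirDeriv_congr _ (eventually_of_mem (hU.mem_nhds hq) hpde)
    _ = linearizedOp a X F (dirDeriv W F) q := by
        rw [dirDeriv_quasilinearOp (fun i j => ha i j _) hXF_diff hXXF_diff]
        simp only [linearizedOp, hXXv, hXv _ q hq, Finset.sum_add_distrib, Finset.sum_mul]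
        rw [add_comm]
        congr 1
        refine Finset.sum_congr rfl fun i _ => Finset.sum_congr rfl fun j _ =>
          Finset.sum_congr rfl fun k _ => ?_
        ring

def affineField (c : E) (φ : E →L[ℝ] ℝ) (e : E) : E → E := fun q => c + φ q • e

variable {c d e : E} {φ ψ : E →L[ℝ] ℝ}

lemma hasFDerivAt_affineField (q : E) : HasFDerivAt (affineField c φ e) (φ.smulRight e) q :=
  (φ.hasFDerivAt.smul_const e).const_add c

lemma contDiff_affineField {n : WithTop ℕ∞} : ContDiff ℝ n (affineField c φ e) :=
  contDiff_const.add (φ.contDiff.smul contDiff_const)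

lemma lieBracket_affineField (hφ : φ e = 0) (hψ : ψ e = 0) (q : E) :
    lieBracket ℝ (affineField c φ e) (affineField d ψ e) q = (ψ c - φ d) • e := by
  simp only [lieBracket_eq, (hasFDerivAt_affineField q).fderiv]
  simp [affineField, hφ, hψ, sub_smul]

lemma dirDeriv_affineField (f : E → ℝ) (q : E) :
    dirDeriv (affineField c φ e) f q = fderiv ℝ f q c + φ q * fderiv ℝ f q e := by
  simp [dirDeriv, affineField]

end VectorFieldCalculus

lemma differentiable_aCoef (i j : Fin 3) : Differentiable ℝ fun η => aCoef η i j := by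
  simp only [aCoef, div_eq_mul_inv]
  fun_prop (disch := exact fun η => by positivity)

section Spacetime

def coord (k : Fin 3) : Pt × ℝ →L[ℝ] ℝ :=
  (ContinuousLinearMap.proj k).comp (ContinuousLinearMap.fst ℝ Pt ℝ)

def spaceDir (k : Fin 3) : Pt × ℝ := (Pi.single k 1, 0)

def leftFrame (ε : ℝ) : Fin 3 → Pt × ℝ → Pt × ℝ :=
  ![affineField (spaceDir 0) (-coord 1) (spaceDir 2),
    affineField (spaceDir 1) (coord 0) (spaceDir 2),
    affineField ((2 * ε) • spaceDir 2) 0 (spaceDir 2)]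

def rightFrame : Fin 3 → Pt × ℝ → Pt × ℝ :=
  ![affineField (spaceDir 0) (coord 1) (spaceDir 2),
    affineField (spaceDir 1) (-coord 0) (spaceDir 2),
    affineField ((2 : ℝ) • spaceDir 2) 0 (spaceDir 2)]

def timeField : Pt × ℝ → Pt × ℝ := affineField (0, 1) 0 (spaceDir 2)

lemma lieBracket_leftFrame_rightFrame (ε : ℝ) (i h : Fin 3) :
    lieBracket ℝ (leftFrame ε i) (rightFrame h) = 0 := by
  ext1 q
  fin_cases i <;> fin_cases h <;>
    simp [leftFrame, rightFrame, lieBracket_affineField, coord, spaceDir]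

lemma lieBracket_leftFrame_timeField (ε : ℝ) (i : Fin 3) :
    lieBracket ℝ (leftFrame ε i) timeField = 0 := by
  ext1 q
  fin_cases i <;> simp [leftFrame, timeField, lieBracket_affineField, coord, spaceDir]

lemma lieBracket_timeField_rightFrame (h : Fin 3) :
    lieBracket ℝ timeField (rightFrame h) = 0 := by
  ext1 q
  fin_cases h <;> simp [rightFrame, timeField, lieBracket_affineField, coord, spaceDir]

lemma contDiff_leftFrame (ε : ℝ) (i : Fin 3) {n : WithTop ℕ∞} : ContDiff ℝ n (leftFrame ε i) := by
  fin_cases i <;> exact contDiff_affineField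

lemma contDiff_rightFrame (h : Fin 3) {n : WithTop ℕ∞} : ContDiff ℝ n (rightFrame h) := by
  fin_cases h <;> exact contDiff_affineField

end Spacetime

section Slices

variable {f : Pt × ℝ → ℝ} {x : Pt} {t : ℝ}

lemma pd_eq_of_slice (hf : DifferentiableAt ℝ f (x, t)) {G : Pt → ℝ}
    (hG : G =ᶠ[𝓝 x] fun y => f (y, t)) (k : Fin 3) :
    pd k G x = fderiv ℝ f (x, t) (spaceDir k) := by
  have hslice : HasFDerivAt (fun y => f (y, t))
      ((fderiv ℝ f (x, t)).comp (ContinuousLinearMap.inl ℝ Pt ℝ)) x :=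
    hf.hasFDerivAt.comp x (hasFDerivAt_prodMk_left x t)
  rw [pd, hG.fderiv_eq, hslice.fderiv]
  rfl

lemma Xe_eq_dirDeriv (ε : ℝ) (hf : DifferentiableAt ℝ f (x, t)) {G : Pt → ℝ}
    (hG : G =ᶠ[𝓝 x] fun y => f (y, t)) (i : Fin 3) :
    Xe ε i G x = dirDeriv (leftFrame ε i) f (x, t) := by
  fin_cases i <;>
    simp [Xe, X1, X2, X3, leftFrame, dirDeriv_affineField, pd_eq_of_slice hf hG, coord] <;>
    ring

lemma XR_eq_dirDeriv (hf : DifferentiableAt ℝ f (x, t)) {G : Pt → ℝ}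
    (hG : G =ᶠ[𝓝 x] fun y => f (y, t)) (h : Fin 3) :
    XR h G x = dirDeriv (rightFrame h) f (x, t) := by
  fin_cases h <;>
    simp [XR, X1r, X2r, X3r, rightFrame, dirDeriv_affineField, pd_eq_of_slice hf hG, coord,
      sub_eq_add_neg]

lemma deriv_eq_dirDeriv_timeField (hf : DifferentiableAt ℝ f (x, t)) {G : ℝ → ℝ}
    (hG : G =ᶠ[𝓝 t] fun s => f (x, s)) :
    deriv G t = dirDeriv timeField f (x, t) := by
  have hslice : HasDerivAt (fun s => f (x, s)) (fderiv ℝ f (x, t) (0, 1)) t :=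
    hf.hasFDerivAt.comp_hasDerivAt t ((hasDerivAt_const t x).prodMk (hasDerivAt_id t))
  simp [hG.deriv_eq, hslice.deriv, timeField, dirDeriv_affineField]

lemma Xe_Xe_eq_dirDeriv (ε : ℝ) {U : Set (Pt × ℝ)} (hU : IsOpen U) (hf : ContDiffOn ℝ 2 f U)
    (hxt : (x, t) ∈ U) {G : Pt → ℝ} (hG : G =ᶠ[𝓝 x] fun y => f (y, t)) (i j : Fin 3) :
    Xe ε i (Xe ε j G) x = dirDeriv (leftFrame ε i) (dirDeriv (leftFrame ε j) f) (x, t) := by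
  have hXf : ContDiffOn ℝ 1 (dirDeriv (leftFrame ε j) f) U :=
    hf.dirDeriv hU (contDiff_leftFrame ε j)
  refine Xe_eq_dirDeriv ε ((hXf.contDiffAt (hU.mem_nhds hxt)).differentiableAt one_ne_zero) ?_ i
  have hslice : ∀ᶠ y in 𝓝 x, (y, t) ∈ U :=
    (continuous_id.prodMk continuous_const).continuousAt.preimage_mem_nhds (hU.mem_nhds hxt)
  filter_upwards [hG.eventuallyEq_nhds, hslice] with y hGy hy
  exact Xe_eq_dirDeriv ε ((hf.contDiffAt (hU.mem_nhds hy)).differentiableAt two_ne_zero) hGy j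

end Slices

section Translation

variable {ε : ℝ} {U : Set (Pt × ℝ)} {f g : Pt × ℝ → ℝ} {x : Pt} {t : ℝ} {G H : Pt → ℝ}

lemma gradE_eq_fieldGrad (hf : DifferentiableAt ℝ f (x, t))
    (hG : G =ᶠ[𝓝 x] fun y => f (y, t)) :
    gradE ε G x = fieldGrad (leftFrame ε) f (x, t) :=
  funext (Xe_eq_dirDeriv ε hf hG)

lemma sum_aCoef_mul_Xe_Xe_eq_quasilinearOp (hU : IsOpen U) (hf : ContDiffOn ℝ 2 f U)
    (hxt : (x, t) ∈ U) (hG : G =ᶠ[𝓝 x] fun y => f (y, t)) :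
    ∑ i, ∑ j, aCoef (gradE ε G x) i j * Xe ε i (Xe ε j G) x
      = quasilinearOp aCoef (leftFrame ε) f (x, t) := by
  rw [gradE_eq_fieldGrad ((hf.contDiffAt (hU.mem_nhds hxt)).differentiableAt two_ne_zero) hG]
  simp only [Xe_Xe_eq_dirDeriv ε hU hf hxt hG, quasilinearOp]

lemma sum_aCoef_add_sum_aCoefD_eq_linearizedOp (hU : IsOpen U) (hf : ContDiffOn ℝ 2 f U)
    (hg : ContDiffOn ℝ 2 g U) (hxt : (x, t) ∈ U) (hG : G =ᶠ[𝓝 x] fun y => f (y, t))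
    (hH : H =ᶠ[𝓝 x] fun y => g (y, t)) :
    (∑ i, ∑ j, aCoef (gradE ε G x) i j * Xe ε i (Xe ε j H) x) +
        ∑ i, ∑ j, ∑ k, aCoefD k (gradE ε G x) i j * Xe ε i (Xe ε j G) x * Xe ε k H x
      = linearizedOp aCoef (leftFrame ε) f g (x, t) := by
  have hdiff : ∀ {φ : Pt × ℝ → ℝ}, ContDiffOn ℝ 2 φ U → DifferentiableAt ℝ φ (x, t) :=
    fun hφ => (hφ.contDiffAt (hU.mem_nhds hxt)).differentiableAt two_ne_zero
  rw [gradE_eq_fieldGrad (hdiff hf) hG]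
  simp only [Xe_Xe_eq_dirDeriv ε hU hf hxt hG, Xe_Xe_eq_dirDeriv ε hU hg hxt hH,
    Xe_eq_dirDeriv ε (hdiff hg) hH, linearizedOp, aCoefD]

lemma exists_commuting_field_eqOn (ε : ℝ) {U : Set (Pt × ℝ)} {u v : Pt → ℝ → ℝ}
    (hu : ∀ q ∈ U, DifferentiableAt ℝ (fun q : Pt × ℝ => u q.1 q.2) q)
    (hv : (v = fun x t => deriv (u x) t) ∨ ∃ h : Fin 3, v = fun x t => XR h (fun y => u y t) x) :
    ∃ W : Pt × ℝ → Pt × ℝ, ContDiff ℝ 2 W ∧ (∀ i, lieBracket ℝ (leftFrame ε i) W = 0) ∧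
      lieBracket ℝ timeField W = 0 ∧
      EqOn (fun q => v q.1 q.2) (dirDeriv W fun q => u q.1 q.2) U := by
  rcases hv with rfl | ⟨h, rfl⟩
  · exact ⟨timeField, contDiff_affineField, lieBracket_leftFrame_timeField ε,
      lieBracket_self, fun q hq => deriv_eq_dirDeriv_timeField (hu q hq) .rfl⟩
  · exact ⟨rightFrame h, contDiff_rightFrame h, (lieBracket_leftFrame_rightFrame ε · h),
      lieBracket_timeField_rightFrame h, fun q hq => XR_eq_dirDeriv (hu q hq) .rfl h⟩

end Translation

theorem statement_9_general (ε : ℝ) (Ω : Set Pt) (hΩ : IsOpen Ω)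
    (T : ℝ) (u : Pt → ℝ → ℝ)
    (hu : ContDiffOn ℝ 3 (fun q : Pt × ℝ => u q.1 q.2) (Ω ×ˢ Ioo 0 T))
    (hpde : ∀ x ∈ Ω, ∀ t ∈ Ioo (0 : ℝ) T,
      deriv (u x) t = ∑ i, ∑ j, aCoef (gradE ε (fun y => u y t) x) i j *
        Xe ε i (Xe ε j (fun y => u y t)) x) :
    ∀ v : Pt → ℝ → ℝ,
      ((v = fun x t => deriv (u x) t) ∨ ∃ h : Fin 3, v = fun x t => XR h (fun y => u y t) x) →
      ∀ x ∈ Ω, ∀ t ∈ Ioo (0 : ℝ) T,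
        deriv (v x) t =
          (∑ i, ∑ j, aCoef (gradE ε (fun y => u y t) x) i j *
            Xe ε i (Xe ε j (fun y => v y t)) x) +
          ∑ i, ∑ j, ∑ k, aCoefD k (gradE ε (fun y => u y t) x) i j *
            Xe ε i (Xe ε j (fun y => u y t)) x * Xe ε k (fun y => v y t) x := by
  set F : Pt × ℝ → ℝ := fun q => u q.1 q.2
  have hU : IsOpen (Ω ×ˢ Ioo 0 T) := hΩ.prod isOpen_Ioo
  have hF : ContDiffOn ℝ 2 F (Ω ×ˢ Ioo 0 T) := hu.of_le (by norm_num)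
  have hF_diff : ∀ q ∈ Ω ×ˢ Ioo 0 T, DifferentiableAt ℝ F q := fun q hq =>
    (hF.contDiffAt (hU.mem_nhds hq)).differentiableAt two_ne_zero
  rintro v hv x hx t ht
  obtain ⟨W, hW, hXW, hTW, hvW⟩ := exists_commuting_field_eqOn ε hF_diff hv
  have hpde_spacetime : ∀ q ∈ Ω ×ˢ Ioo 0 T,
      dirDeriv timeField F q = quasilinearOp aCoef (leftFrame ε) F q := fun q hq => by
    rw [← deriv_eq_dirDeriv_timeField (hF_diff q hq) .rfl,
      ← sum_aCoef_mul_Xe_Xe_eq_quasilinearOp hU hF hq .rfl]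
    exact hpde q.1 hq.1 q.2 hq.2
  have hv_near : (fun q => v q.1 q.2) =ᶠ[𝓝 (x, t)] dirDeriv W F :=
    hvW.eventuallyEq_of_mem (hU.mem_nhds ⟨hx, ht⟩)
  have hv_time : v x =ᶠ[𝓝 t] fun s => dirDeriv W F (x, s) :=
    hv_near.comp_tendsto ((continuous_const.prodMk continuous_id).tendsto' _ _ rfl)
  have hv_space : (fun y => v y t) =ᶠ[𝓝 x] fun y => dirDeriv W F (y, t) :=
    hv_near.comp_tendsto ((continuous_id.prodMk continuous_const).tendsto' _ _ rfl)
  have hg : ContDiffOn ℝ 2 (dirDeriv W F) (Ω ×ˢ Ioo 0 T) := hu.dirDeriv hU hW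
  rw [deriv_eq_dirDeriv_timeField ((hg.contDiffAt (hU.mem_nhds ⟨hx, ht⟩)).differentiableAt
      two_ne_zero) hv_time,
    sum_aCoef_add_sum_aCoefD_eq_linearizedOp hU hF hg ⟨hx, ht⟩ .rfl hv_space]
  exact dirDeriv_solves_linearizedOp hU differentiable_aCoef (fun i => contDiff_leftFrame ε i)
    (contDiff_affineField.differentiable one_ne_zero) (hW.differentiable two_ne_zero) hu hXW hTW
    hpde_spacetime ⟨hx, ht⟩

/-- If `u ∈ C³` solves the ε-mean curvature flow equation on the Heisenberg group,
then `v₀ = ∂_t u` and `v_h = X_h^r u` (h = 1,2,3) each solve the linearized equation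
`∂_t v = Σ a_{ij}(∇_ε u) X_i^ε X_j^ε v + Σ (∂_{ξ_k} a_{ij})(∇_ε u) X_i^ε X_j^ε u X_k^ε v`. -/
theorem statement_9 (ε : ℝ) (hε : ε ∈ Ioc (0 : ℝ) 1) (Ω : Set Pt) (hΩ : IsOpen Ω)
    (T : ℝ) (hT : 0 < T) (u : Pt → ℝ → ℝ)
    (hu : ContDiffOn ℝ 3 (fun q : Pt × ℝ => u q.1 q.2) (Ω ×ˢ Ioo 0 T))
    (hpde : ∀ x ∈ Ω, ∀ t ∈ Ioo (0 : ℝ) T,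
      deriv (u x) t = ∑ i, ∑ j, aCoef (gradE ε (fun y => u y t) x) i j *
        Xe ε i (Xe ε j (fun y => u y t)) x) :
    ∀ v : Pt → ℝ → ℝ,
      ((v = fun x t => deriv (u x) t) ∨ ∃ h : Fin 3, v = fun x t => XR h (fun y => u y t) x) →
      ∀ x ∈ Ω, ∀ t ∈ Ioo (0 : ℝ) T,
        deriv (v x) t =
          (∑ i, ∑ j, aCoef (gradE ε (fun y => u y t) x) i j *
            Xe ε i (Xe ε j (fun y => v y t)) x) +
          ∑ i, ∑ j, ∑ k, aCoefD k (gradE ε (fun y => u y t) x) i j *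
            Xe ε i (Xe ε j (fun y => u y t)) x * Xe ε k (fun y => v y t) x :=
  statement_9_general ε Ω hΩ T u hu hpde

end
end
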